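/- Completeness of (C, d̃): every Cauchy sequence of ordered coalescing pairs [(f₁^{(n)},t₁^{(n)}),(f₂^{(n)},t₂^{(n)})] in (C, d̃) converges in (C, d̃) to an ordered coalescing pair [(f₁,t₁),(f₂,t₂)] ∈ C; in particular the limit paths satisfy f₁(t) ≠ f₂(t) for t ∈ (t⁺, t^c) and f₁ = f₂ on [t^c,∞) when t^c < ∞. -/

import Mathlib

open Set Filter Topology

/-- A path of Π′: a continuous real path starting at time `t0 ∈ [0,1]` from a point of `[-1,1]`,
represented by its extension to `[0,∞)` (constant equal to `f t0` before `t0`). -/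
structure PathP where
  t0 : ℝ
  f : ℝ → ℝ
  ht0 : t0 ∈ Set.Icc (0:ℝ) 1
  hf : Continuous f
  hconst : ∀ t ≤ t0, f t = f t0
  hstart : f t0 ∈ Set.Icc (-1:ℝ) 1

/-- `sup_{t ∈ [0,n+1]} |f̂(t) - ĝ(t)|`. -/
noncomputable def supAbs (γ η : PathP) (n : ℕ) : ℝ :=
  ⨆ t : Set.Icc (0:ℝ) ((n:ℝ)+1), |γ.f t - η.f t|

/-- The sup-type metric d′ on Π′. -/
noncomputable def dprime (γ η : PathP) : ℝ :=
  max |γ.t0 - η.t0| (∑' n : ℕ, (2:ℝ)⁻¹ ^ (n+1) * min (supAbs γ η n) 1)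

/-- The set `{t > t⁺ : f₁(t) = f₂(t)}` whose infimum is the coalescence time. -/
def coalSet (γ η : PathP) : Set ℝ :=
  {t : ℝ | max γ.t0 η.t0 < t ∧ γ.f t = η.f t}

/-- The pair coalesces: either `t^c = ∞` or the two paths agree from `t^c` on. -/
def Coalesces (γ η : PathP) : Prop :=
  coalSet γ η = ∅ ∨ ∀ t, sInf (coalSet γ η) ≤ t → γ.f t = η.f t

/-- An ordered coalescing pair of paths: an element of the space 𝒞. -/
structure CoalPair where
  p1 : PathP
  p2 : PathP
  ordered : ∀ t, max p1.t0 p2.t0 ≤ t → p1.f t ≤ p2.f t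
  coal : Coalesces p1 p2

/-- The beginning `t⁺` of the pod. -/
noncomputable def tPlus (F : CoalPair) : ℝ := max F.p1.t0 F.p2.t0

/-- The coalescence time (meaningful when `tcFinite F`). -/
noncomputable def tcReal (F : CoalPair) : ℝ := sInf (coalSet F.p1 F.p2)

/-- The coalescence time is finite. -/
def tcFinite (F : CoalPair) : Prop := (coalSet F.p1 F.p2).Nonempty

/-- Inverse of `tanh`. -/
noncomputable def artanh (x : ℝ) : ℝ := Real.log ((1 + x) / (1 - x)) / 2

/-- The pod function in the `tanh` time variable. -/
noncomputable def podT (F : CoalPair) (x : ℝ) : ℝ :=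
  F.p2.f (artanh x) - F.p1.f (artanh x)

noncomputable def ttPlus (F : CoalPair) : ℝ := Real.tanh (tPlus F)

open Classical in
/-- `Ψ(t^c)`, with the convention `Ψ(∞) = 1`. -/
noncomputable def ttc (F : CoalPair) : ℝ :=
  if tcFinite F then Real.tanh (tcReal F) else 1

noncomputable def ttm (F : CoalPair) : ℝ := (ttPlus F + ttc F) / 2

/-- The standard pod of a coalescing pair. -/
noncomputable def stdPod (F : CoalPair) : ℝ → ℝ := fun x =>
  let a := ttPlus F
  let c := ttc F
  let m := ttm F
  let mid := podT F m + (1 - (c - m)) / 2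
  if x ≤ m - a then podT F (x + a)
  else if x ≤ 1/2 then
    podT F m + (x - (m - a)) * (mid - podT F m) / (1/2 - (m - a))
  else if x ≤ 1 - (c - m) then
    mid + (x - 1/2) * (podT F m - mid) / ((1 - (c - m)) - 1/2)
  else podT F (x - (1 - c))

/-- The pod-comparison functional Δ. -/
noncomputable def Delta (p q : ℝ → ℝ) : ℝ :=
  ∑' n : ℕ, (2:ℝ)⁻¹ ^ (n+2) *
    min (⨆ x : Set.Icc (((n:ℝ)+2)⁻¹) (1 - ((n:ℝ)+2)⁻¹), |1 / p x - 1 / q x|) 1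

/-- The Hausdorff-type function d̄ = max_i min_j d′. -/
noncomputable def dbar (F G : CoalPair) : ℝ :=
  max (min (dprime F.p1 G.p1) (dprime F.p1 G.p2))
      (min (dprime F.p2 G.p1) (dprime F.p2 G.p2))

/-- The metric d̃ = d̄ + Δ on 𝒞. -/
noncomputable def dtilde (F G : CoalPair) : ℝ :=
  dbar F G + Delta (stdPod F) (stdPod G)

/-!
Along a `d̃`-Cauchy sequence the pairs of paths are `d̄`-Cauchy. Labelling the two paths
consistently along a fast subsequence, both labelled sequences converge in `Π′`, which is complete
for `d′`: uniform convergence on compacts together with convergence of the starting times.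

The `Δ`-part makes the reciprocals of the standard pods uniformly Cauchy, hence uniformly
convergent, on every window `[1/(n+2), 1 - 1/(n+2)]`; in particular the standard pods are bounded
below there. The standard pod reproduces the pod at every `tanh`-time between `Ψ(t⁺)` and
`Ψ(t^c)` at a point of a fixed window, so the limit pod is positive below every cluster point of
`Ψ(t^c_n)`, and it vanishes above every cluster point because the pods do. Hence `Ψ(t^c_n)`
converges, the limit paths form an ordered coalescing pair, and its coalescence time is the limit.
The standard pods then converge pointwise on `(0, 1)` to the standard pod of the limit, which
identifies the uniform limit of the reciprocals and gives `Δ → 0`. The exception is the degenerate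
shape `Ψ(t⁺) = 0`, `Ψ(t^c) = 1`, where the standard pod jumps in its parameters; there the same
uniform convergence forces the approximating pairs to be exactly degenerate eventually.

A Cauchy sequence with a convergent subsequence converges, by the triangle inequality for `d̃`.
-/

/-! ### Preliminaries -/

namespace Real

lemma tanh_mem_Ioo (x : ℝ) : tanh x ∈ Ioo (-1) 1 := ⟨neg_one_lt_tanh x, tanh_lt_one x⟩

lemma tanh_strictMono : StrictMono tanh := fun a b hab => by
  rwa [← artanh_lt_artanh_iff (tanh_mem_Ioo a) (tanh_mem_Ioo b), artanh_tanh, artanh_tanh]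

lemma continuous_tanh : Continuous tanh := by
  rw [show tanh = fun x => sinh x / cosh x from funext tanh_eq_sinh_div_cosh]
  exact continuous_sinh.div continuous_cosh fun x => (cosh_pos x).ne'

end Real

lemma artanh_eq_real_artanh {x : ℝ} (hx : x ∈ Icc (-1) 1) : artanh x = Real.artanh x := by
  rw [Real.artanh_eq_half_log hx, artanh]
  ring

lemma tanh_artanh {x : ℝ} (hx : x ∈ Ioo (-1) 1) : Real.tanh (artanh x) = x := by
  rw [artanh_eq_real_artanh (Ioo_subset_Icc_self hx), Real.tanh_artanh hx]

lemma artanh_tanh (x : ℝ) : artanh (Real.tanh x) = x := by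
  rw [artanh_eq_real_artanh (Ioo_subset_Icc_self (Real.tanh_mem_Ioo x)), Real.artanh_tanh]

lemma lt_artanh_iff {x : ℝ} (hx : x ∈ Ioo (-1) 1) {t : ℝ} : t < artanh x ↔ Real.tanh t < x := by
  conv_rhs => rw [← tanh_artanh hx]
  exact Real.tanh_strictMono.lt_iff_lt.symm

lemma artanh_lt_iff {x : ℝ} (hx : x ∈ Ioo (-1) 1) {t : ℝ} : artanh x < t ↔ x < Real.tanh t := by
  conv_rhs => rw [← tanh_artanh hx]
  exact Real.tanh_strictMono.lt_iff_lt.symm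

lemma continuousAt_artanh {x : ℝ} (hx : x ∈ Ioo (-1) 1) : ContinuousAt artanh x := by
  have h₁ : 1 - x ≠ 0 := by linarith [hx.2]
  have h₂ : (1 + x) / (1 - x) ≠ 0 := div_ne_zero (by linarith [hx.1]) h₁
  exact (((continuousAt_const.add continuousAt_id).div (continuousAt_const.sub continuousAt_id)
    h₁).log h₂).div_const 2

/-- `d′` is built on this series with `k = 1`, and `Δ` with `k = 2`. -/
noncomputable def geomSum (k : ℕ) (a : ℕ → ℝ) : ℝ := ∑' n, (2:ℝ)⁻¹ ^ (n + k) * min (a n) 1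

section geomSum

variable {k : ℕ} {a b c : ℕ → ℝ}

lemma summable_two_inv_pow_add (k : ℕ) : Summable fun n : ℕ => (2:ℝ)⁻¹ ^ (n + k) :=
  (summable_geometric_of_lt_one (by norm_num) (by norm_num)).comp_injective (add_left_injective k)

lemma summable_geomSum (ha : ∀ n, 0 ≤ a n) :
    Summable fun n => (2:ℝ)⁻¹ ^ (n + k) * min (a n) 1 :=
  (summable_two_inv_pow_add k).of_nonneg_of_le
    (fun n => mul_nonneg (by positivity) (le_min (ha n) zero_le_one))
    (fun n => mul_le_of_le_one_right (by positivity) (min_le_right _ _))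

lemma geomSum_nonneg (ha : ∀ n, 0 ≤ a n) : 0 ≤ geomSum k a :=
  tsum_nonneg fun n => mul_nonneg (by positivity) (le_min (ha n) zero_le_one)

lemma term_le_geomSum (ha : ∀ n, 0 ≤ a n) (n : ℕ) :
    (2:ℝ)⁻¹ ^ (n + k) * min (a n) 1 ≤ geomSum k a :=
  (summable_geomSum ha).le_tsum n fun m _ => mul_nonneg (by positivity) (le_min (ha m) zero_le_one)

lemma le_of_geomSum_le (ha : ∀ n, 0 ≤ a n) {ε : ℝ} (h : geomSum k a ≤ ε) {n : ℕ}
    (hε : 2 ^ (n + k) * ε < 1) : a n ≤ 2 ^ (n + k) * ε := by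
  have hpos : (0:ℝ) < 2 ^ (n + k) := by positivity
  have hmin : min (a n) 1 ≤ 2 ^ (n + k) * ε := by
    have := (term_le_geomSum ha n).trans h
    rw [inv_pow, inv_mul_le_iff₀ hpos] at this
    exact this
  rcases min_cases (a n) 1 with ⟨he, -⟩ | ⟨he, -⟩ <;> rw [he] at hmin <;> linarith

lemma geomSum_le_add (ha : ∀ n, 0 ≤ a n) (hb : ∀ n, 0 ≤ b n) (hc : ∀ n, 0 ≤ c n)
    (h : ∀ n, a n ≤ b n + c n) :
    geomSum k a ≤ geomSum k b + geomSum k c := by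
  have ha' : ∀ n, min (a n) 1 ≤ min (b n) 1 + min (c n) 1 := fun n => by
    have := hb n
    have := hc n
    rw [min_def (b n), min_def (c n)]
    split_ifs <;> linarith [h n, min_le_left (a n) 1, min_le_right (a n) 1]
  rw [geomSum, geomSum, geomSum, ← (summable_geomSum hb).tsum_add (summable_geomSum hc)]
  refine (summable_geomSum ha).tsum_le_tsum (fun n => ?_)
    ((summable_geomSum hb).add (summable_geomSum hc))
  rw [← mul_add]
  exact mul_le_mul_of_nonneg_left (ha' n) (by positivity)

lemma tendsto_geomSum_zero_iff {ι : Type*} {l : Filter ι} {a : ι → ℕ → ℝ}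
    (ha : ∀ i n, 0 ≤ a i n) :
    Tendsto (fun i => geomSum k (a i)) l (𝓝 0) ↔ ∀ n, Tendsto (fun i => a i n) l (𝓝 0) := by
  constructor
  · intro h n
    have hsmall : ∀ᶠ i in l, 2 ^ (n + k) * geomSum k (a i) < 1 := by
      have := (tendsto_const_nhds (x := (2:ℝ) ^ (n + k))).mul h
      rw [mul_zero] at this
      exact this.eventually (eventually_lt_nhds one_pos)
    refine squeeze_zero' (Eventually.of_forall fun i => ha i n)
      (hsmall.mono fun i hi => le_of_geomSum_le (ha i) le_rfl hi) ?_
    simpa using (tendsto_const_nhds (x := (2:ℝ) ^ (n + k))).mul h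
  · intro h
    have := tendsto_tsum_of_dominated_convergence (𝓕 := l)
      (f := fun i n => (2:ℝ)⁻¹ ^ (n + k) * min (a i n) 1) (g := fun _ => 0)
      (summable_two_inv_pow_add k)
      (fun n => by
        simpa using ((h n).min (tendsto_const_nhds (x := (1:ℝ)))).const_mul ((2:ℝ)⁻¹ ^ (n + k)))
      (Eventually.of_forall fun i n => by
        rw [Real.norm_eq_abs, abs_of_nonneg (mul_nonneg (by positivity)
          (le_min (ha i n) zero_le_one))]
        exact mul_le_of_le_one_right (by positivity) (min_le_right _ _))
    simpa [geomSum] using this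

end geomSum

section UniformSup

variable {ι α : Type*} {l : Filter ι} {s : Set α} {F : ι → α → ℝ} {f : α → ℝ}

lemma tendsto_iSup_abs_sub_of_tendstoUniformlyOn (h : TendstoUniformlyOn F f l s) :
    Tendsto (fun i => ⨆ x : s, |F i x - f x|) l (𝓝 0) := by
  rw [Metric.tendsto_nhds]
  intro ε hε
  filter_upwards [Metric.tendstoUniformlyOn_iff.1 h (ε / 2) (half_pos hε)] with i hi
  have hle : ⨆ x : s, |F i x - f x| ≤ ε / 2 :=
    Real.iSup_le (fun x => by rw [abs_sub_comm]; exact (hi x x.2).le) (half_pos hε).le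
  rw [Real.dist_eq, sub_zero, abs_of_nonneg (Real.iSup_nonneg fun _ => abs_nonneg _)]
  linarith

lemma tendstoUniformlyOn_of_tendsto_iSup (hb : ∀ i, BddAbove (range fun x : s => |F i x - f x|))
    (h : Tendsto (fun i => ⨆ x : s, |F i x - f x|) l (𝓝 0)) : TendstoUniformlyOn F f l s := by
  rw [Metric.tendstoUniformlyOn_iff]
  intro ε hε
  filter_upwards [(Metric.tendsto_nhds.1 h) ε hε] with i hi x hx
  rw [Real.dist_eq, sub_zero] at hi
  rw [Real.dist_eq, abs_sub_comm]
  exact (le_ciSup (hb i) ⟨x, hx⟩).trans_lt ((le_abs_self _).trans_lt hi)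

lemma bddAbove_range_abs_sub [TopologicalSpace α] {g : α → ℝ} (hs : IsCompact s)
    (hf : ContinuousOn f s) (hg : ContinuousOn g s) :
    BddAbove (range fun x : s => |f x - g x|) := by
  have := hs.bddAbove_image (f := fun x => |f x - g x|) (hf.sub hg).abs
  rwa [image_eq_range] at this

lemma exists_tendstoUniformlyOn_of_uniformCauchySeqOn {F : ℕ → α → ℝ} {s : ℕ → Set α}
    (h : ∀ n, UniformCauchySeqOn F atTop (s n)) :
    ∃ g : α → ℝ, ∀ n, TendstoUniformlyOn F g atTop (s n) :=
  ⟨fun x => limUnder atTop fun k => F k x, fun n =>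
    (h n).tendstoUniformlyOn_of_tendsto fun _ hx => ((h n).cauchySeq hx).tendsto_limUnder⟩

end UniformSup

lemma continuousOn_ite_le {s : Set ℝ} {b : ℝ} {f g : ℝ → ℝ} (hf : ContinuousOn f (s ∩ Iic b))
    (hg : ContinuousOn g (s ∩ Ici b)) (hfg : f b = g b) :
    ContinuousOn (fun x => if x ≤ b then f x else g x) s := by
  refine ContinuousOn.if (fun x hx => ?_) ?_ ?_
  · rw [frontier_Iic_subset b hx.2]
    exact hfg
  · rwa [show {x : ℝ | x ≤ b} = Iic b from rfl, closure_Iic]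
  · simp_rw [not_le]
    rwa [show {x : ℝ | b < x} = Ioi b from rfl, closure_Ioi]

lemma tendsto_ite_le {ι : Type*} {l : Filter ι} {b u v : ι → ℝ} {x b₀ u₀ v₀ : ℝ}
    (hb : Tendsto b l (𝓝 b₀)) (hu : x ≤ b₀ → Tendsto u l (𝓝 u₀))
    (hv : b₀ ≤ x → Tendsto v l (𝓝 v₀)) (huv : x = b₀ → u₀ = v₀) :
    Tendsto (fun i => if x ≤ b i then u i else v i) l (𝓝 (if x ≤ b₀ then u₀ else v₀)) := by
  rcases lt_trichotomy x b₀ with hx | rfl | hx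
  · rw [if_pos hx.le]
    refine (hu hx.le).congr' ?_
    filter_upwards [hb.eventually (eventually_gt_nhds hx)] with i hi
    rw [if_pos hi.le]
  · rw [if_pos le_rfl]
    exact ((hu le_rfl).mono_left inf_le_left).if
      ((huv rfl ▸ hv le_rfl).mono_left inf_le_left)
  · rw [if_neg hx.not_ge]
    refine (hv hx.le).congr' ?_
    filter_upwards [hb.eventually (eventually_lt_nhds hx)] with i hi
    rw [if_neg hi.not_ge]

lemma tendsto_max_zero_iff {ι : Type*} {l : Filter ι} {a b : ι → ℝ} (ha : ∀ i, 0 ≤ a i)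
    (hb : ∀ i, 0 ≤ b i) :
    Tendsto (fun i => max (a i) (b i)) l (𝓝 0) ↔ Tendsto a l (𝓝 0) ∧ Tendsto b l (𝓝 0) :=
  ⟨fun h => ⟨squeeze_zero ha (fun _ => le_max_left _ _) h,
      squeeze_zero hb (fun _ => le_max_right _ _) h⟩,
    fun h => by simpa using h.1.max h.2⟩

lemma Ici_subset_of_Ioi_subset {s : Set ℝ} (hs : IsClosed s) {a : ℝ} (h : Ioi a ⊆ s) :
    Ici a ⊆ s := by
  rw [← closure_Ioi]
  exact hs.closure_subset_iff.2 h

/-! ### The path space `Π′` -/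

namespace PathP

lemma f_eq_f_zero (γ : PathP) {t : ℝ} (ht : t ≤ 0) : γ.f t = γ.f 0 :=
  (γ.hconst t (ht.trans γ.ht0.1)).trans (γ.hconst 0 γ.ht0.1).symm

lemma f_max_zero (γ : PathP) (t : ℝ) : γ.f (max t 0) = γ.f t := by
  rcases le_total t 0 with h | h
  · rw [max_eq_right h, γ.f_eq_f_zero h]
  · rw [max_eq_left h]

lemma abs_sub_le_supAbs (γ η : PathP) {n : ℕ} {t : ℝ} (ht : t ∈ Icc (0:ℝ) (n + 1)) :
    |γ.f t - η.f t| ≤ supAbs γ η n :=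
  le_ciSup (bddAbove_range_abs_sub isCompact_Icc γ.hf.continuousOn η.hf.continuousOn) ⟨t, ht⟩

lemma supAbs_nonneg (γ η : PathP) (n : ℕ) : 0 ≤ supAbs γ η n :=
  Real.iSup_nonneg fun _ => abs_nonneg _

lemma supAbs_comm (γ η : PathP) : supAbs γ η = supAbs η γ := by
  ext n
  simp only [supAbs, abs_sub_comm]

lemma supAbs_triangle (γ η ζ : PathP) (n : ℕ) :
    supAbs γ ζ n ≤ supAbs γ η n + supAbs η ζ n :=
  Real.iSup_le (fun t => (abs_sub_le _ _ _).trans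
      (add_le_add (γ.abs_sub_le_supAbs η t.2) (η.abs_sub_le_supAbs ζ t.2)))
    (add_nonneg (supAbs_nonneg _ _ _) (supAbs_nonneg _ _ _))

lemma dprime_eq (γ η : PathP) : dprime γ η = max |γ.t0 - η.t0| (geomSum 1 (supAbs γ η)) := rfl

noncomputable instance : PseudoMetricSpace PathP where
  dist := dprime
  dist_self γ := by simp [dprime_eq, supAbs, geomSum]
  dist_comm γ η := by rw [dprime_eq, dprime_eq, abs_sub_comm, supAbs_comm]
  dist_triangle γ η ζ := by
    simp only [dprime_eq]
    apply max_le
    · exact (abs_sub_le _ _ _).trans (add_le_add (le_max_left _ _) (le_max_left _ _))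
    · exact (geomSum_le_add (supAbs_nonneg _ _) (supAbs_nonneg _ _) (supAbs_nonneg _ _)
        (supAbs_triangle γ η ζ)).trans (add_le_add (le_max_right _ _) (le_max_right _ _))

lemma dist_eq (γ η : PathP) : dist γ η = dprime γ η := rfl

lemma abs_sub_le_of_dist_le {γ η : PathP} {ε : ℝ} (h : dist γ η ≤ ε) {n : ℕ}
    (hε : 2 ^ (n + 1) * ε < 1) {t : ℝ} (ht : t ∈ Icc (0:ℝ) (n + 1)) :
    |γ.f t - η.f t| ≤ 2 ^ (n + 1) * ε :=
  (γ.abs_sub_le_supAbs η ht).trans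
    (le_of_geomSum_le (supAbs_nonneg γ η) ((le_max_right _ _).trans h) hε)

variable {ι : Type*} {l : Filter ι}

lemma tendsto_nhds_iff {u : ι → PathP} {ψ : PathP} :
    Tendsto u l (𝓝 ψ) ↔ Tendsto (fun i => (u i).t0) l (𝓝 ψ.t0) ∧
      ∀ n : ℕ, TendstoUniformlyOn (fun i => (u i).f) ψ.f l (Icc 0 (n + 1)) := by
  have hsup : ∀ n, Tendsto (fun i => supAbs (u i) ψ n) l (𝓝 0) ↔
      TendstoUniformlyOn (fun i => (u i).f) ψ.f l (Icc 0 (n + 1)) := fun n =>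
    ⟨tendstoUniformlyOn_of_tendsto_iSup fun i =>
        bddAbove_range_abs_sub isCompact_Icc (u i).hf.continuousOn ψ.hf.continuousOn,
      tendsto_iSup_abs_sub_of_tendstoUniformlyOn⟩
  rw [tendsto_iff_dist_tendsto_zero, tendsto_iff_dist_tendsto_zero (a := ψ.t0)]
  simp only [dist_eq, dprime_eq, Real.dist_eq]
  rw [tendsto_max_zero_iff (fun _ => abs_nonneg _) fun _ => geomSum_nonneg (supAbs_nonneg _ _),
    tendsto_geomSum_zero_iff fun i => supAbs_nonneg (u i) ψ]
  simp only [hsup]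

lemma tendsto_apply_of_tendstoUniformlyOn {u : ι → PathP} {φ : ℝ → ℝ} (hφ : Continuous φ)
    (hφ₀ : ∀ t, φ (max t 0) = φ t)
    (hu : ∀ n : ℕ, TendstoUniformlyOn (fun i => (u i).f) φ l (Icc 0 (n + 1)))
    {s : ι → ℝ} {t : ℝ} (hs : Tendsto s l (𝓝 t)) :
    Tendsto (fun i => (u i).f (s i)) l (𝓝 (φ t)) := by
  obtain ⟨n, hn⟩ := exists_nat_gt (max t 0)
  have hs' : Tendsto (fun i => max (s i) 0) l (𝓝[Icc 0 (n + 1)] (max t 0)) := by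
    have hmax := hs.max (tendsto_const_nhds (x := (0:ℝ)))
    refine tendsto_nhdsWithin_iff.2 ⟨hmax, ?_⟩
    filter_upwards [hmax.eventually (eventually_lt_nhds (hn.trans (lt_add_one _)))] with i hi
    exact ⟨le_max_right _ _, hi.le⟩
  simpa only [f_max_zero, hφ₀] using (hu n).tendsto_comp hφ.continuousWithinAt hs'

lemma tendsto_apply {u : ι → PathP} {ψ : PathP} (hu : Tendsto u l (𝓝 ψ)) {s : ι → ℝ} {t : ℝ}
    (hs : Tendsto s l (𝓝 t)) : Tendsto (fun i => (u i).f (s i)) l (𝓝 (ψ.f t)) :=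
  tendsto_apply_of_tendstoUniformlyOn ψ.hf ψ.f_max_zero (tendsto_nhds_iff.1 hu).2 hs

lemma tendsto_t0 {u : ι → PathP} {ψ : PathP} (hu : Tendsto u l (𝓝 ψ)) :
    Tendsto (fun i => (u i).t0) l (𝓝 ψ.t0) :=
  (tendsto_nhds_iff.1 hu).1

lemma uniformCauchySeqOn_of_cauchySeq {u : ℕ → PathP} (hu : CauchySeq u) (n : ℕ) :
    UniformCauchySeqOn (fun k => (u k).f) atTop (Icc 0 (n + 1)) := by
  rw [Metric.uniformCauchySeqOn_iff]
  intro ε hε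
  set δ := min ε 1 / 2 ^ (n + 2)
  have hδ : 2 ^ (n + 1) * δ = min ε 1 / 2 := by
    simp only [δ, pow_succ]
    field_simp
  obtain ⟨N, hN⟩ := Metric.cauchySeq_iff.1 hu δ (by positivity)
  refine ⟨N, fun k hk m hm t ht => ?_⟩
  have := abs_sub_le_of_dist_le (hN k hk m hm).le
    (by rw [hδ]; linarith [min_le_right ε 1]) ht
  rw [Real.dist_eq]
  linarith [min_le_left ε 1]

lemma continuous_of_tendstoUniformlyOn {u : ℕ → PathP} {φ : ℝ → ℝ}
    (hφ₀ : ∀ t, φ (max t 0) = φ t)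
    (hu : ∀ n : ℕ, TendstoUniformlyOn (fun k => (u k).f) φ atTop (Icc 0 (n + 1))) :
    Continuous φ := by
  have hOn : ContinuousOn φ (Ici 0) := fun x hx => by
    obtain ⟨n, hn⟩ := exists_nat_gt x
    have hc := (hu n).continuousOn (Frequently.of_forall fun k => (u k).hf.continuousOn)
    refine (hc x ⟨hx, by linarith⟩).mono_of_mem_nhdsWithin ?_
    rw [← Ici_inter_Iic]
    exact inter_mem_nhdsWithin _ (Iic_mem_nhds (by linarith))
  rw [show φ = φ ∘ fun t => max t 0 from funext fun t => (hφ₀ t).symm]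
  exact hOn.comp_continuous (continuous_id.max continuous_const) fun t => le_max_right t 0

instance : CompleteSpace PathP := Metric.complete_of_cauchySeq_tendsto fun u hu => by
  have hwin := uniformCauchySeqOn_of_cauchySeq hu
  have hpt : ∀ t, CauchySeq fun k => (u k).f t := fun t => by
    obtain ⟨n, hn⟩ := exists_nat_gt (max t 0)
    simpa only [f_max_zero] using
      (hwin n).cauchySeq (x := max t 0) ⟨le_max_right _ _, by linarith⟩
  choose φ hφ using fun t => cauchySeq_tendsto_of_complete (hpt t)
  have hunif : ∀ n : ℕ, TendstoUniformlyOn (fun k => (u k).f) φ atTop (Icc 0 (n + 1)) :=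
    fun n => (hwin n).tendstoUniformlyOn_of_tendsto fun t _ => hφ t
  have hφ₀ : ∀ t, φ (max t 0) = φ t := fun t =>
    tendsto_nhds_unique (by simpa only [f_max_zero] using hφ (max t 0)) (hφ t)
  have hcont := continuous_of_tendstoUniformlyOn hφ₀ hunif
  have ht0 : CauchySeq fun k => (u k).t0 :=
    (LipschitzWith.of_dist_le_mul (K := 1) fun γ η => by
      rw [NNReal.coe_one, one_mul, Real.dist_eq]
      exact le_max_left _ _).uniformContinuous.comp_cauchySeq hu
  obtain ⟨τ, hτ⟩ := cauchySeq_tendsto_of_complete ht0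
  have hstart := tendsto_apply_of_tendstoUniformlyOn hcont hφ₀ hunif hτ
  refine ⟨⟨τ, φ, isClosed_Icc.mem_of_tendsto hτ (Eventually.of_forall fun k => (u k).ht0),
    hcont, fun t ht => ?_,
    isClosed_Icc.mem_of_tendsto hstart (Eventually.of_forall fun k => (u k).hstart)⟩,
    tendsto_nhds_iff.2 ⟨hτ, hunif⟩⟩
  rcases ht.eq_or_lt with rfl | ht
  · rfl
  refine tendsto_nhds_unique (hφ t) (hstart.congr' ?_)
  filter_upwards [hτ.eventually (eventually_gt_nhds ht)] with k hk
  exact ((u k).hconst t hk.le).symm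

end PathP

/-! ### The shape of the standard pod -/

noncomputable def tent (p b x : ℝ) : ℝ := p + (1 - b) / 2 * (1 - |x - 1/2| / (1/2 - b))

lemma tent_eq_of_abs_eq {p b x : ℝ} (hb : b < 1/2) (hx : |x - 1/2| = 1/2 - b) :
    tent p b x = p := by
  rw [tent, hx, div_self (by linarith), sub_self, mul_zero, add_zero]

lemma tendsto_tent {ι : Type*} {l : Filter ι} {p b : ι → ℝ} {p₀ b₀ : ℝ} (x : ℝ)
    (hp : Tendsto p l (𝓝 p₀)) (hb : Tendsto b l (𝓝 b₀)) (hb₀ : b₀ ≠ 1/2) :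
    Tendsto (fun i => tent (p i) (b i) x) l (𝓝 (tent p₀ b₀ x)) :=
  hp.add (((tendsto_const_nhds.sub hb).div_const 2).mul (tendsto_const_nhds.sub
    (tendsto_const_nhds.div (tendsto_const_nhds.sub hb) (sub_ne_zero.2 hb₀.symm))))

noncomputable def podShape (a c : ℝ) (P : ℝ → ℝ) (x : ℝ) : ℝ :=
  let m := (a + c) / 2
  let mid := P m + (1 - (c - m)) / 2
  if x ≤ m - a then P (x + a)
  else if x ≤ 1/2 then P m + (x - (m - a)) * (mid - P m) / (1/2 - (m - a))
  else if x ≤ 1 - (c - m) then mid + (x - 1/2) * (P m - mid) / ((1 - (c - m)) - 1/2)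
  else P (x - (1 - c))

lemma stdPod_eq_podShape (X : CoalPair) : stdPod X = podShape (ttPlus X) (ttc X) (podT X) := rfl

lemma podShape_eq (a c : ℝ) (P : ℝ → ℝ) (x : ℝ) :
    podShape a c P x = if x ≤ (c - a) / 2 then P (x + a)
      else if x ≤ 1 - (c - a) / 2 then tent (P ((a + c) / 2)) ((c - a) / 2) x
      else P (x - (1 - c)) := by
  have hm : (a + c) / 2 - a = (c - a) / 2 := by ring
  have hm' : 1 - (c - (a + c) / 2) = 1 - (c - a) / 2 := by ring
  simp only [podShape, hm, hm', tent]
  generalize (c - a) / 2 = b at *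
  split_ifs with h₁ h₂ h₃ h₄ <;> try rfl
  · have hinv : (1 / 2 - b) * (1 / 2 - b)⁻¹ = 1 := mul_inv_cancel₀ (by linarith)
    rw [abs_of_nonpos (by linarith)]
    simp only [div_eq_mul_inv]
    linear_combination (1 - b) / 2 * hinv
  · linarith
  · rw [abs_of_pos (by linarith), show 1 - b - 1 / 2 = 1 / 2 - b by ring]
    ring

lemma podShape_zero_one (P : ℝ → ℝ) (x : ℝ) : podShape 0 1 P x = P x := by
  rw [podShape_eq]
  split_ifs with h₁ h₂
  · rw [add_zero]
  · norm_num at h₁ h₂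
    linarith
  · norm_num

lemma podShape_breakpoint (a c : ℝ) (P : ℝ → ℝ) :
    podShape a c P ((c - a) / 2) = P ((a + c) / 2) := by
  rw [podShape_eq, if_pos le_rfl]
  ring_nf

lemma podShape_half {a c : ℝ} (P : ℝ → ℝ) (h : c - a < 1) :
    podShape a c P (1 / 2) = P ((a + c) / 2) + (1 - (c - a) / 2) / 2 := by
  rw [podShape_eq, if_neg (by linarith), if_pos (by linarith), tent, sub_self, abs_zero,
    zero_div, sub_zero, mul_one]

lemma podShape_pos {a c : ℝ} {P : ℝ → ℝ} (hP : ∀ y ∈ Ioo a c, 0 < P y)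
    (hPm : 0 ≤ P ((a + c) / 2)) {x : ℝ} (hx : x ∈ Ioo 0 1) : 0 < podShape a c P x := by
  obtain ⟨hx₀, hx₁⟩ := hx
  rw [podShape_eq]
  split_ifs with h₁ h₂
  · exact hP _ ⟨by linarith, by linarith⟩
  · have hb : (c - a) / 2 < 1 / 2 := by linarith
    have hd : 0 < 1 / 2 - (c - a) / 2 := by linarith
    have habs : |x - 1/2| ≤ 1 / 2 - (c - a) / 2 := abs_le.2 ⟨by linarith, by linarith⟩
    have hfac : 0 ≤ 1 - |x - 1/2| / (1 / 2 - (c - a) / 2) := by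
      rw [sub_nonneg, div_le_one hd]
      exact habs
    rw [tent]
    rcases h₂.lt_or_eq with h₂ | h₂
    · have : |x - 1/2| < 1 / 2 - (c - a) / 2 := abs_lt.2 ⟨by linarith, by linarith⟩
      have hfac' : 0 < 1 - |x - 1/2| / (1 / 2 - (c - a) / 2) := by
        rw [sub_pos, div_lt_one hd]
        exact this
      have : 0 < (1 - (c - a) / 2) / 2 := by linarith
      positivity
    · have := hP ((a + c) / 2) ⟨by linarith, by linarith⟩
      have : 0 ≤ (1 - (c - a) / 2) / 2 := by linarith
      positivity
  · exact hP _ ⟨by linarith, by linarith⟩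

lemma continuousOn_podShape {a c : ℝ} {P : ℝ → ℝ} (ha : 0 ≤ a) (ha₁ : a < 1) (hac : a ≤ c)
    (hc : c ≤ 1) (hP : ContinuousOn P (Ico 0 1)) : ContinuousOn (podShape a c P) (Ioo 0 1) := by
  by_cases hdeg : c - a = 1
  · obtain rfl : a = 0 := by linarith
    obtain rfl : c = 1 := by linarith
    rw [show podShape 0 1 P = P from funext (podShape_zero_one P)]
    exact hP.mono Ioo_subset_Ico_self
  have hd : (c - a) / 2 < 1 / 2 := by
    have : c - a < 1 := lt_of_le_of_ne (by linarith) hdeg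
    linarith
  rw [show podShape a c P = _ from funext (podShape_eq a c P)]
  refine continuousOn_ite_le ?_ (continuousOn_ite_le ?_ ?_ ?_) ?_
  · exact hP.comp (continuousOn_id.add continuousOn_const)
      fun x hx => ⟨by linarith [hx.1.1], by linarith [hx.2.out]⟩
  · exact Continuous.continuousOn (by unfold tent; fun_prop)
  · exact hP.comp (continuousOn_id.sub continuousOn_const)
      fun x hx => ⟨by linarith [hx.2.out], by linarith [hx.1.1.2]⟩
  · rw [tent_eq_of_abs_eq hd (by rw [abs_of_nonneg (by linarith)]; ring)]
    ring_nf
  · rw [if_pos (by linarith), tent_eq_of_abs_eq hd (by rw [abs_of_nonpos (by linarith)]; ring)]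
    ring_nf

lemma tendsto_podShape {ι : Type*} {l : Filter ι} {a c : ι → ℝ} {P : ι → ℝ → ℝ} {a₀ c₀ : ℝ}
    {P₀ : ℝ → ℝ} (ha : Tendsto a l (𝓝 a₀)) (hc : Tendsto c l (𝓝 c₀))
    (ha₀ : 0 ≤ a₀) (ha₁ : a₀ < 1) (hac₀ : a₀ ≤ c₀)
    (hc₀ : c₀ ≤ 1) (hdeg : c₀ - a₀ < 1)
    (hP : ∀ y : ι → ℝ, ∀ y₀ ∈ Ico (0:ℝ) 1, Tendsto y l (𝓝 y₀) →
      Tendsto (fun i => P i (y i)) l (𝓝 (P₀ y₀)))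
    {x : ℝ} (hx : x ∈ Ioo 0 1) :
    Tendsto (fun i => podShape (a i) (c i) (P i) x) l (𝓝 (podShape a₀ c₀ P₀ x)) := by
  obtain ⟨hx₀, hx₁⟩ := hx
  have hb₀ : (c₀ - a₀) / 2 < 1 / 2 := by linarith
  rw [show (fun i => podShape (a i) (c i) (P i) x) = _ from
      funext fun i => podShape_eq (a i) (c i) (P i) x, podShape_eq]
  have hb : Tendsto (fun i => (c i - a i) / 2) l (𝓝 ((c₀ - a₀) / 2)) := (hc.sub ha).div_const 2
  have hPm := hP _ _ ⟨by linarith, by linarith⟩ ((ha.add hc).div_const 2)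
  refine tendsto_ite_le hb (fun h => hP _ _ ⟨by linarith, by linarith⟩
      (tendsto_const_nhds.add ha))
    (fun _ => tendsto_ite_le (tendsto_const_nhds.sub hb)
      (fun _ => tendsto_tent x hPm hb hb₀.ne)
      (fun h => hP _ _ ⟨by linarith, by linarith⟩
        (tendsto_const_nhds.sub (tendsto_const_nhds.sub hc)))
      (fun h => ?_)) (fun h => ?_)
  · rw [tent_eq_of_abs_eq hb₀ (by rw [h, abs_of_nonneg (by linarith)]; ring), h]
    ring_nf
  · rw [if_pos (by linarith), tent_eq_of_abs_eq hb₀ (by rw [h, abs_of_nonpos (by linarith)]; ring),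
      h]
    ring_nf

/-! ### Pods of coalescing pairs -/

namespace CoalPair

variable (X : CoalPair) {t : ℝ}

/-- `podT X y` is `X.pod (artanh y)` by definition. -/
def pod (t : ℝ) : ℝ := X.p2.f t - X.p1.f t

lemma continuous_pod : Continuous X.pod := X.p2.hf.sub X.p1.hf

lemma tPlus_mem_Icc : tPlus X ∈ Icc (0:ℝ) 1 :=
  ⟨le_max_of_le_left X.p1.ht0.1, max_le X.p1.ht0.2 X.p2.ht0.2⟩

lemma pod_nonneg (ht : tPlus X ≤ t) : 0 ≤ X.pod t := sub_nonneg.2 (X.ordered t ht)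

lemma pod_pos_of_notMem_coalSet (ht : tPlus X < t) (hS : t ∉ coalSet X.p1 X.p2) :
    0 < X.pod t :=
  (X.pod_nonneg ht.le).lt_of_ne fun h => hS ⟨ht, (sub_eq_zero.1 h.symm).symm⟩

lemma pod_pos_of_lt_tcReal (h₁ : tPlus X < t) (h₂ : t < tcReal X) :
    0 < X.pod t :=
  X.pod_pos_of_notMem_coalSet h₁ fun hS => h₂.not_ge (csInf_le ⟨tPlus X, fun _ hs => hs.1.le⟩ hS)

lemma pod_pos_of_not_tcFinite (hX : ¬ tcFinite X) (ht : tPlus X < t) : 0 < X.pod t :=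
  X.pod_pos_of_notMem_coalSet ht fun hS => hX ⟨t, hS⟩

lemma pod_eq_zero_of_tcReal_le (hX : tcFinite X) (ht : tcReal X ≤ t) : X.pod t = 0 := by
  rcases X.coal with h | h
  · exact absurd hX (by rw [tcFinite, h]; exact not_nonempty_empty)
  · rw [pod, h t ht, sub_self]

lemma tPlus_le_tcReal (hX : tcFinite X) : tPlus X ≤ tcReal X := le_csInf hX fun _ ht => ht.1.le

lemma ttPlus_nonneg : 0 ≤ ttPlus X := by
  rw [ttPlus, ← Real.tanh_zero]
  exact Real.tanh_strictMono.monotone X.tPlus_mem_Icc.1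

lemma ttc_eq_tanh (hX : tcFinite X) : ttc X = Real.tanh (tcReal X) := if_pos hX

lemma ttc_eq_one (hX : ¬ tcFinite X) : ttc X = 1 := if_neg hX

lemma ttc_le_one : ttc X ≤ 1 := by
  by_cases hX : tcFinite X
  · exact (X.ttc_eq_tanh hX).trans_le (Real.tanh_lt_one _).le
  · exact (X.ttc_eq_one hX).le

lemma ttPlus_le_ttc : ttPlus X ≤ ttc X := by
  by_cases hX : tcFinite X
  · rw [X.ttc_eq_tanh hX]
    exact Real.tanh_strictMono.monotone (X.tPlus_le_tcReal hX)
  · rw [X.ttc_eq_one hX]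
    exact (Real.tanh_lt_one _).le

lemma pod_pos_of_tanh_lt_ttc (h₁ : tPlus X < t) (h₂ : Real.tanh t < ttc X) : 0 < X.pod t := by
  by_cases hX : tcFinite X
  · rw [X.ttc_eq_tanh hX] at h₂
    exact X.pod_pos_of_lt_tcReal h₁ (Real.tanh_strictMono.lt_iff_lt.1 h₂)
  · exact X.pod_pos_of_not_tcFinite hX h₁

lemma pod_eq_zero_of_ttc_lt_tanh (h : ttc X < Real.tanh t) : X.pod t = 0 := by
  have hX : tcFinite X := by
    by_contra hX
    rw [X.ttc_eq_one hX] at h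
    exact (Real.tanh_lt_one t).not_gt h
  rw [X.ttc_eq_tanh hX] at h
  exact X.pod_eq_zero_of_tcReal_le hX (Real.tanh_strictMono.lt_iff_lt.1 h).le

lemma continuousOn_podT : ContinuousOn (podT X) (Ioo (-1) 1) := fun _ hy =>
  (X.continuous_pod.continuousAt.comp (continuousAt_artanh hy)).continuousWithinAt

lemma stdPod_pos {x : ℝ} (hx : x ∈ Ioo 0 1) : 0 < stdPod X x := by
  have hnonneg := X.ttPlus_nonneg
  refine podShape_pos (fun y hy => ?_) ?_ hx
  · have hy' : y ∈ Ioo (-1) 1 := ⟨by linarith [hy.1], hy.2.trans_le X.ttc_le_one⟩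
    refine X.pod_pos_of_tanh_lt_ttc ((lt_artanh_iff hy').2 hy.1) ?_
    rw [tanh_artanh hy']
    exact hy.2
  · have ha : ttPlus X < 1 := Real.tanh_lt_one _
    have hm : (ttPlus X + ttc X) / 2 ∈ Ioo (-1) 1 :=
      ⟨by linarith [X.ttPlus_le_ttc], by linarith [X.ttc_le_one]⟩
    refine X.pod_nonneg (not_lt.1 fun h => ?_)
    rw [artanh_lt_iff hm] at h
    linarith [X.ttPlus_le_ttc, show ttPlus X = Real.tanh (tPlus X) from rfl]

lemma continuousOn_stdPod : ContinuousOn (stdPod X) (Ioo 0 1) :=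
  continuousOn_podShape X.ttPlus_nonneg (Real.tanh_lt_one _) X.ttPlus_le_ttc X.ttc_le_one
    (X.continuousOn_podT.mono fun _ hy => ⟨by linarith [hy.1], hy.2⟩)

lemma continuousOn_inv_stdPod : ContinuousOn (fun x => 1 / stdPod X x) (Ioo 0 1) :=
  continuousOn_const.div X.continuousOn_stdPod fun _ hx => (X.stdPod_pos hx).ne'

lemma ttc_eq_of_pod {c : ℝ} (hc₀ : ttPlus X ≤ c) (hc₁ : c ≤ 1)
    (hpos : ∀ t, tPlus X < t → Real.tanh t < c → X.pod t ≠ 0)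
    (hzero : ∀ t, c < Real.tanh t → X.pod t = 0) : ttc X = c := by
  have hlow : ∀ t ∈ coalSet X.p1 X.p2, c ≤ Real.tanh t := fun t ht =>
    not_lt.1 fun h => hpos t ht.1 h (by rw [pod, ht.2, sub_self])
  rcases hc₁.lt_or_eq with hc₁ | rfl
  · have hc : c ∈ Ioo (-1) 1 := ⟨by linarith [X.ttPlus_nonneg], hc₁⟩
    have hmem : ∀ t, artanh c < t → t ∈ coalSet X.p1 X.p2 := fun t ht => by
      rw [artanh_lt_iff hc] at ht
      refine ⟨Real.tanh_strictMono.lt_iff_lt.1 (hc₀.trans_lt ht), ?_⟩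
      exact (sub_eq_zero.1 (hzero t ht)).symm
    have hX : tcFinite X := ⟨_, hmem _ (lt_add_one _)⟩
    rw [ttc_eq_tanh X hX, ← tanh_artanh hc]
    congr 1
    refine le_antisymm (le_of_forall_gt_imp_ge_of_dense fun t ht =>
      csInf_le ⟨tPlus X, fun _ hs => hs.1.le⟩ (hmem t ht)) (le_csInf hX fun t ht => ?_)
    exact not_lt.1 fun h => ((lt_artanh_iff hc).1 h).not_ge (hlow t ht)
  · rw [ttc_eq_one X fun ⟨t, ht⟩ => (hlow t ht).not_gt (Real.tanh_lt_one t)]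

lemma exists_stdPod_eq_podT (y : ℝ) :
    ∃ x ∈ Icc (y - ttPlus X) (max y (1 - (ttc X - y))), stdPod X x = podT X y := by
  have ha := X.ttPlus_nonneg
  have hc := X.ttc_le_one
  rw [stdPod_eq_podShape]
  by_cases hy : y ≤ (ttPlus X + ttc X) / 2
  · refine ⟨y - ttPlus X, ⟨le_rfl, by linarith [le_max_left y (1 - (ttc X - y))]⟩, ?_⟩
    rw [podShape_eq, if_pos (by linarith), sub_add_cancel]
  · refine ⟨y + 1 - ttc X, ⟨by linarith, by linarith [le_max_right y (1 - (ttc X - y))]⟩, ?_⟩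
    rw [podShape_eq, if_neg (by linarith [X.ttPlus_le_ttc]), if_neg (by linarith)]
    congr 1
    ring

end CoalPair

/-! ### The functional `Δ` and the function `d̃` -/

def window (n : ℕ) : Set ℝ := Icc ((n + 2 : ℝ)⁻¹) (1 - (n + 2 : ℝ)⁻¹)

lemma window_subset_Ioo (n : ℕ) : window n ⊆ Ioo 0 1 := fun x hx => by
  have : (0:ℝ) < (n + 2 : ℝ)⁻¹ := by positivity
  exact ⟨this.trans_le hx.1, hx.2.trans_lt (by linarith)⟩

lemma exists_Icc_subset_window {lo hi : ℝ} (hlo : 0 < lo) (hhi : hi < 1) :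
    ∃ n, Icc lo hi ⊆ window n := by
  obtain ⟨n, hn⟩ := exists_nat_one_div_lt (lt_min hlo (sub_pos.2 hhi))
  have : (n + 2 : ℝ)⁻¹ < min lo (1 - hi) :=
    lt_of_le_of_lt (by rw [one_div]; gcongr; linarith) hn
  exact ⟨n, fun x hx => ⟨by linarith [min_le_left lo (1 - hi), hx.1],
    by linarith [min_le_right lo (1 - hi), hx.2]⟩⟩

lemma Delta_eq (p q : ℝ → ℝ) :
    Delta p q = geomSum 2 fun n => ⨆ x : window n, |1 / p x - 1 / q x| := rfl

lemma Delta_nonneg (p q : ℝ → ℝ) : 0 ≤ Delta p q :=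
  geomSum_nonneg fun _ => Real.iSup_nonneg fun _ => abs_nonneg _

lemma bddAbove_window (X Y : CoalPair) (n : ℕ) :
    BddAbove (range fun x : window n => |1 / stdPod X x - 1 / stdPod Y x|) :=
  bddAbove_range_abs_sub isCompact_Icc (X.continuousOn_inv_stdPod.mono (window_subset_Ioo n))
    (Y.continuousOn_inv_stdPod.mono (window_subset_Ioo n))

lemma Delta_triangle (X Y Z : CoalPair) :
    Delta (stdPod X) (stdPod Z) ≤ Delta (stdPod X) (stdPod Y) + Delta (stdPod Y) (stdPod Z) :=
  geomSum_le_add (fun _ => Real.iSup_nonneg fun _ => abs_nonneg _)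
    (fun _ => Real.iSup_nonneg fun _ => abs_nonneg _)
    (fun _ => Real.iSup_nonneg fun _ => abs_nonneg _) fun n =>
    Real.iSup_le (fun x => (abs_sub_le _ _ _).trans (add_le_add
        (le_ciSup (bddAbove_window X Y n) x) (le_ciSup (bddAbove_window Y Z n) x)))
      (add_nonneg (Real.iSup_nonneg fun _ => abs_nonneg _)
        (Real.iSup_nonneg fun _ => abs_nonneg _))

lemma abs_inv_stdPod_sub_le {X Y : CoalPair} {ε : ℝ} (h : Delta (stdPod X) (stdPod Y) ≤ ε)
    {n : ℕ} (hε : 2 ^ (n + 2) * ε < 1) {x : ℝ} (hx : x ∈ window n) :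
    |1 / stdPod X x - 1 / stdPod Y x| ≤ 2 ^ (n + 2) * ε :=
  (le_ciSup (bddAbove_window X Y n) ⟨x, hx⟩).trans
    (le_of_geomSum_le (fun _ => Real.iSup_nonneg fun _ => abs_nonneg _) h hε)

lemma uniformCauchySeqOn_inv_stdPod {H : ℕ → CoalPair}
    (hΔ : ∀ ε > 0, ∃ N, ∀ m ≥ N, ∀ n ≥ N, Delta (stdPod (H m)) (stdPod (H n)) < ε) (n : ℕ) :
    UniformCauchySeqOn (fun k x => 1 / stdPod (H k) x) atTop (window n) := by
  rw [Metric.uniformCauchySeqOn_iff]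
  intro ε hε
  set δ := min ε 1 / 2 ^ (n + 3)
  have hδ : 2 ^ (n + 2) * δ = min ε 1 / 2 := by
    simp only [δ, pow_succ]
    field_simp
  obtain ⟨N, hN⟩ := hΔ δ (by positivity)
  refine ⟨N, fun k hk m hm x hx => ?_⟩
  have := abs_inv_stdPod_sub_le (hN k hk m hm).le (by rw [hδ]; linarith [min_le_right ε 1]) hx
  rw [Real.dist_eq]
  linarith [min_le_left ε 1]

lemma tendsto_Delta_zero {ι : Type*} {l : Filter ι} {H : ι → CoalPair} {G : CoalPair}
    (h : ∀ n, TendstoUniformlyOn (fun k x => 1 / stdPod (H k) x) (fun x => 1 / stdPod G x) l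
      (window n)) :
    Tendsto (fun k => Delta (stdPod (H k)) (stdPod G)) l (𝓝 0) := by
  simp only [Delta_eq]
  exact (tendsto_geomSum_zero_iff fun _ _ => Real.iSup_nonneg fun _ => abs_nonneg _).2 fun n =>
    tendsto_iSup_abs_sub_of_tendstoUniformlyOn (F := fun k x => 1 / stdPod (H k) x)
      (f := fun x => 1 / stdPod G x) (h n)

lemma min_dist_le_add_min_dist {E : Type*} [PseudoMetricSpace E] (x y z₁ z₂ : E) :
    min (dist x z₁) (dist x z₂) ≤ dist x y + min (dist y z₁) (dist y z₂) :=
  (min_le_min (dist_triangle _ _ _) (dist_triangle _ _ _)).trans (min_add_add_left _ _ _).le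

lemma dbar_eq (X Y : CoalPair) : dbar X Y = max (min (dist X.p1 Y.p1) (dist X.p1 Y.p2))
    (min (dist X.p2 Y.p1) (dist X.p2 Y.p2)) := rfl

lemma dbar_nonneg (X Y : CoalPair) : 0 ≤ dbar X Y := by
  rw [dbar_eq]
  exact le_max_of_le_left (le_min dist_nonneg dist_nonneg)

lemma dbar_le_max_dist (X Y : CoalPair) : dbar X Y ≤ max (dist X.p1 Y.p1) (dist X.p2 Y.p2) := by
  rw [dbar_eq]
  exact max_le_max (min_le_left _ _) (min_le_right _ _)

lemma dbar_triangle (X Y Z : CoalPair) : dbar X Z ≤ dbar X Y + dbar Y Z := by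
  have hY₁ : min (dist Y.p1 Z.p1) (dist Y.p1 Z.p2) ≤ dbar Y Z := le_max_left _ _
  have hY₂ : min (dist Y.p2 Z.p1) (dist Y.p2 Z.p2) ≤ dbar Y Z := le_max_right _ _
  have hx : ∀ x, min (dist x Z.p1) (dist x Z.p2) ≤ min (dist x Y.p1) (dist x Y.p2) + dbar Y Z :=
    fun x => by
      rcases min_choice (dist x Y.p1) (dist x Y.p2) with h | h <;> rw [h]
      · exact (min_dist_le_add_min_dist x Y.p1 _ _).trans (by gcongr)
      · exact (min_dist_le_add_min_dist x Y.p2 _ _).trans (by gcongr)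
  rw [dbar_eq, dbar_eq X Y]
  exact max_le ((hx _).trans (by gcongr; exact le_max_left _ _))
    ((hx _).trans (by gcongr; exact le_max_right _ _))

lemma dtilde_nonneg (X Y : CoalPair) : 0 ≤ dtilde X Y :=
  add_nonneg (dbar_nonneg X Y) (Delta_nonneg _ _)

lemma dtilde_triangle (X Y Z : CoalPair) : dtilde X Z ≤ dtilde X Y + dtilde Y Z := by
  have := dbar_triangle X Y Z
  have := Delta_triangle X Y Z
  simp only [dtilde]
  linarith

lemma dbar_le_dtilde (X Y : CoalPair) : dbar X Y ≤ dtilde X Y :=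
  le_add_of_nonneg_right (Delta_nonneg _ _)

lemma Delta_le_dtilde (X Y : CoalPair) : Delta (stdPod X) (stdPod Y) ≤ dtilde X Y :=
  le_add_of_nonneg_left (dbar_nonneg X Y)

lemma tendsto_of_cauchy_of_subseq {α : Type*} {d : α → α → ℝ}
    (hd : ∀ x y z, d x z ≤ d x y + d y z) (hd₀ : ∀ x y, 0 ≤ d x y) {u : ℕ → α}
    (hu : ∀ ε > 0, ∃ N, ∀ m ≥ N, ∀ n ≥ N, d (u m) (u n) < ε) {μ : ℕ → ℕ} (hμ : StrictMono μ)
    {x : α} (h : Tendsto (fun k => d (u (μ k)) x) atTop (𝓝 0)) :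
    Tendsto (fun n => d (u n) x) atTop (𝓝 0) := by
  rw [Metric.tendsto_atTop] at h ⊢
  intro ε hε
  obtain ⟨N, hN⟩ := hu (ε / 2) (half_pos hε)
  obtain ⟨K, hK⟩ := h (ε / 2) (half_pos hε)
  set k := max N K
  refine ⟨N, fun n hn => ?_⟩
  have h₁ := hN n hn (μ k) ((le_max_left N K).trans (hμ.id_le k))
  have h₂ := hK k (le_max_right N K)
  rw [Real.dist_eq, sub_zero, abs_of_nonneg (hd₀ _ _)] at h₂ ⊢
  linarith [hd (u n) (u (μ k)) x]

/-! ### Labelling the paths along a Cauchy sequence -/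

lemma exists_matching {E : Type*} [PseudoMetricSpace E] {x₁ x₂ y₁ y₂ : E} {δ : ℝ}
    (h₁ : min (dist x₁ y₁) (dist x₁ y₂) ≤ δ) (h₂ : min (dist x₂ y₁) (dist x₂ y₂) ≤ δ)
    (h₃ : min (dist y₁ x₁) (dist y₁ x₂) ≤ δ) (h₄ : min (dist y₂ x₁) (dist y₂ x₂) ≤ δ) :
    dist (x₁, x₂) (y₁, y₂) ≤ 3 * δ ∨ dist (x₁, x₂) (y₂, y₁) ≤ 3 * δ := by
  have hδ : 0 ≤ δ := (le_min dist_nonneg dist_nonneg).trans h₁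
  have t₁ := dist_triangle4 x₁ y₂ x₂ y₁
  have t₂ := dist_triangle4 x₂ y₁ x₁ y₂
  have t₃ := dist_triangle4 x₁ y₁ x₂ y₂
  have t₄ := dist_triangle4 x₂ y₂ x₁ y₁
  simp only [Prod.dist_eq, max_le_iff]
  simp only [dist_comm y₁, dist_comm y₂] at h₃ h₄ t₁ t₂ t₃ t₄
  rcases min_le_iff.1 h₁ with h₁ | h₁ <;> rcases min_le_iff.1 h₂ with h₂ | h₂ <;>
    rcases min_le_iff.1 h₃ with h₃ | h₃ <;> rcases min_le_iff.1 h₄ with h₄ | h₄ <;>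
    first
    | exact Or.inl ⟨by linarith, by linarith⟩
    | exact Or.inr ⟨by linarith, by linarith⟩

def orient (X : CoalPair) : Bool → PathP × PathP
  | false => (X.p1, X.p2)
  | true => (X.p2, X.p1)

lemma exists_orient_dist_le {X Y : CoalPair} {δ : ℝ} (hXY : dbar X Y ≤ δ) (hYX : dbar Y X ≤ δ)
    (b : Bool) : ∃ b', dist (orient X b) (orient Y b') ≤ 3 * δ := by
  rw [dbar_eq, max_le_iff] at hXY hYX
  cases b
  · rcases exists_matching hXY.1 hXY.2 hYX.1 hYX.2 with h | h
    exacts [⟨false, h⟩, ⟨true, h⟩]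
  · rcases exists_matching hXY.2 hXY.1 (by rw [min_comm]; exact hYX.1)
      (by rw [min_comm]; exact hYX.2) with h | h
    exacts [⟨false, h⟩, ⟨true, h⟩]

lemma exists_orient_seq {X : ℕ → CoalPair} {δ : ℕ → ℝ}
    (h : ∀ k, dbar (X k) (X (k + 1)) ≤ δ k ∧ dbar (X (k + 1)) (X k) ≤ δ k) :
    ∃ σ : ℕ → Bool, ∀ k, dist (orient (X k) (σ k)) (orient (X (k + 1)) (σ (k + 1))) ≤ 3 * δ k := by
  choose next hnext using fun k => exists_orient_dist_le (h k).1 (h k).2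
  exact ⟨fun k => Nat.rec false next k, fun k => hnext k _⟩

/-- Since `d̄` only compares the unordered pairs of paths, the labels have to be chosen along the
sequence; one of the two labellings of the limit recurs infinitely often. -/
theorem exists_subseq_tendsto_paths {F : ℕ → CoalPair}
    (hF : ∀ ε > 0, ∃ N, ∀ m ≥ N, ∀ n ≥ N, dbar (F m) (F n) < ε) :
    ∃ μ : ℕ → ℕ, StrictMono μ ∧ ∃ A B : PathP,
      Tendsto (fun k => (F (μ k)).p1) atTop (𝓝 A) ∧
        Tendsto (fun k => (F (μ k)).p2) atTop (𝓝 B) := by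
  obtain ⟨M, hM, hMF⟩ := extraction_forall_of_eventually
    (P := fun k i => ∀ j ≥ i, dbar (F i) (F j) < 2⁻¹ ^ k ∧ dbar (F j) (F i) < 2⁻¹ ^ k) fun k => by
      obtain ⟨N, hN⟩ := hF _ (pow_pos (by norm_num : (0:ℝ) < 2⁻¹) k)
      exact eventually_atTop.2
        ⟨N, fun i hi j hj => ⟨hN i hi j (hi.trans hj), hN j (hi.trans hj) i hi⟩⟩
  obtain ⟨σ, hσ⟩ := exists_orient_seq (X := F ∘ M) (δ := fun k => 2⁻¹ ^ k) fun k =>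
    (hMF k _ (hM (Nat.lt_succ_self k)).le).imp le_of_lt le_of_lt
  obtain ⟨L, hL⟩ := cauchySeq_tendsto_of_complete
    (cauchySeq_of_le_geometric 2⁻¹ 3 (by norm_num) hσ)
  obtain ⟨b, hb⟩ : ∃ b, ∃ᶠ k in atTop, σ k = b := by
    by_contra! h
    obtain ⟨k, hk⟩ := ((h false).and (h true)).exists
    cases hσk : σ k <;> simp [hσk] at hk
  obtain ⟨e, he, hσe⟩ := extraction_of_frequently_atTop hb
  have hLe : Tendsto (fun k => orient (F (M (e k))) b) atTop (𝓝 L) := by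
    simpa only [Function.comp_def, hσe] using hL.comp he.tendsto_atTop
  refine ⟨M ∘ e, hM.comp he, ?_⟩
  cases b
  · exact ⟨L.1, L.2, (continuous_fst.tendsto L).comp hLe, (continuous_snd.tendsto L).comp hLe⟩
  · exact ⟨L.2, L.1, (continuous_snd.tendsto L).comp hLe, (continuous_fst.tendsto L).comp hLe⟩

/-! ### The limit pair -/

lemma coalesces_of_tanh {A B : PathP} {c : ℝ}
    (hpos : ∀ t, max A.t0 B.t0 < t → Real.tanh t < c → A.f t ≠ B.f t)
    (hzero : ∀ t, c < Real.tanh t → A.f t = B.f t) : Coalesces A B := by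
  rcases (coalSet A B).eq_empty_or_nonempty with h | hne
  · exact Or.inl h
  refine Or.inr fun t ht => Ici_subset_of_Ioi_subset (isClosed_eq A.hf B.hf) (fun t ht => ?_) ht
  obtain ⟨s, ⟨hs, hAB⟩, hst⟩ := exists_lt_of_csInf_lt hne ht
  exact hzero t ((not_lt.1 fun h => hpos s hs h hAB).trans_lt (Real.tanh_strictMono hst))

section Limit

variable {A B : PathP}

lemma tendsto_pod {ι : Type*} {l : Filter ι} {H : ι → CoalPair}
    (hA : Tendsto (fun k => (H k).p1) l (𝓝 A)) (hB : Tendsto (fun k => (H k).p2) l (𝓝 B))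
    {s : ι → ℝ} {t : ℝ} (hs : Tendsto s l (𝓝 t)) :
    Tendsto (fun k => (H k).pod (s k)) l (𝓝 (B.f t - A.f t)) :=
  (PathP.tendsto_apply hB hs).sub (PathP.tendsto_apply hA hs)

lemma tendsto_tPlus {ι : Type*} {l : Filter ι} {H : ι → CoalPair}
    (hA : Tendsto (fun k => (H k).p1) l (𝓝 A)) (hB : Tendsto (fun k => (H k).p2) l (𝓝 B)) :
    Tendsto (fun k => tPlus (H k)) l (𝓝 (max A.t0 B.t0)) :=
  (PathP.tendsto_t0 hA).max (PathP.tendsto_t0 hB)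

lemma tendsto_ttPlus {ι : Type*} {l : Filter ι} {H : ι → CoalPair}
    (hA : Tendsto (fun k => (H k).p1) l (𝓝 A)) (hB : Tendsto (fun k => (H k).p2) l (𝓝 B)) :
    Tendsto (fun k => ttPlus (H k)) l (𝓝 (Real.tanh (max A.t0 B.t0))) :=
  (Real.continuous_tanh.tendsto _).comp (tendsto_tPlus hA hB)

variable {H : ℕ → CoalPair} {g : ℝ → ℝ}

lemma eq_of_frequently_ttc_lt (hA : Tendsto (fun k => (H k).p1) atTop (𝓝 A))
    (hB : Tendsto (fun k => (H k).p2) atTop (𝓝 B)) {t : ℝ}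
    (h : ∃ᶠ k in atTop, ttc (H k) < Real.tanh t) : A.f t = B.f t :=
  (sub_eq_zero.1 (isClosed_singleton.mem_of_frequently_of_tendsto
    (h.mono fun k hk => (H k).pod_eq_zero_of_ttc_lt_tanh hk)
    (tendsto_pod hA hB tendsto_const_nhds))).symm

lemma continuousOn_of_tendstoUniformlyOn_inv_stdPod {n : ℕ}
    (hg : TendstoUniformlyOn (fun k x => 1 / stdPod (H k) x) g atTop (window n)) :
    ContinuousOn g (window n) :=
  hg.continuousOn (Frequently.of_forall fun k =>
    (H k).continuousOn_inv_stdPod.mono (window_subset_Ioo n))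

lemma exists_forall_inv_stdPod_le {n : ℕ}
    (hg : TendstoUniformlyOn (fun k x => 1 / stdPod (H k) x) g atTop (window n)) :
    ∃ C > 0, ∀ᶠ k in atTop, ∀ x ∈ window n, 1 / stdPod (H k) x ≤ C := by
  obtain ⟨C, hC⟩ := isCompact_Icc.exists_bound_of_continuousOn
    (continuousOn_of_tendstoUniformlyOn_inv_stdPod hg)
  refine ⟨max C 0 + 1, by positivity, ?_⟩
  filter_upwards [Metric.tendstoUniformlyOn_iff.1 hg 1 one_pos] with k hk x hx
  have h₁ := hk x hx
  have h₂ := hC x hx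
  rw [Real.dist_eq] at h₁
  rw [Real.norm_eq_abs] at h₂
  linarith [abs_lt.1 h₁, abs_le.1 h₂, le_max_left C 0]

/-- The standard pod takes the value of the pod at `tanh`-time `y` at a point that stays in a
fixed window as long as `Ψ(t⁺)` stays below `y` and `Ψ(t^c)` above it; so the uniform bounds
on the reciprocals of the standard pods keep the pods away from `0`. -/
lemma pod_pos_of_frequently_le_ttc (hA : Tendsto (fun k => (H k).p1) atTop (𝓝 A))
    (hB : Tendsto (fun k => (H k).p2) atTop (𝓝 B))
    (hg : ∀ n, TendstoUniformlyOn (fun k x => 1 / stdPod (H k) x) g atTop (window n))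
    {t c : ℝ} (ht : max A.t0 B.t0 < t) (htc : Real.tanh t < c)
    (h : ∃ᶠ k in atTop, c ≤ ttc (H k)) : 0 < B.f t - A.f t := by
  set y := Real.tanh t
  set a := Real.tanh (max A.t0 B.t0)
  have hay : a < y := Real.tanh_strictMono ht
  have hc₁ : c ≤ 1 := by
    obtain ⟨k, hk⟩ := h.exists
    exact hk.trans (H k).ttc_le_one
  obtain ⟨n, hn⟩ := exists_Icc_subset_window (lo := (y - a) / 2) (hi := max y (1 - (c - y)))
    (by linarith) (max_lt (Real.tanh_lt_one t) (by linarith))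
  obtain ⟨C, hC₀, hC⟩ := exists_forall_inv_stdPod_le (hg n)
  have ha : ∀ᶠ k in atTop, ttPlus (H k) < (a + y) / 2 :=
    (tendsto_ttPlus hA hB).eventually (eventually_lt_nhds (by linarith))
  have hlow : ∃ᶠ k in atTop, 1 / C ≤ (H k).pod t := by
    refine (h.and_eventually (hC.and ha)).mono fun k ⟨hck, hCk, hak⟩ => ?_
    obtain ⟨x, hx, hxy⟩ := (H k).exists_stdPod_eq_podT y
    have hxn : x ∈ window n := hn ⟨by linarith [hx.1],
      hx.2.trans (max_le_max le_rfl (by linarith))⟩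
    have hpos := (H k).stdPod_pos (window_subset_Ioo n hxn)
    have := hCk x hxn
    have hy : podT (H k) y = (H k).pod t := congrArg (H k).pod (artanh_tanh t)
    rw [hxy, hy] at this hpos
    rw [div_le_iff₀ hpos] at this
    rw [div_le_iff₀ hC₀]
    linarith
  have := isClosed_Ici.mem_of_frequently_of_tendsto hlow (tendsto_pod hA hB tendsto_const_nhds)
  exact (one_div_pos.2 hC₀).trans_le this

lemma tanh_max_t0_le_of_mapClusterPt (hA : Tendsto (fun k => (H k).p1) atTop (𝓝 A))
    (hB : Tendsto (fun k => (H k).p2) atTop (𝓝 B)) {γ : ℝ}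
    (hγ : MapClusterPt γ atTop fun k => ttc (H k)) : Real.tanh (max A.t0 B.t0) ≤ γ := by
  by_contra! h
  obtain ⟨m, hγm, hm⟩ := exists_between h
  obtain ⟨k, hk₁, hk₂⟩ := ((hγ.frequently (eventually_lt_nhds hγm)).and_eventually
    ((tendsto_ttPlus hA hB).eventually (eventually_gt_nhds hm))).exists
  linarith [(H k).ttPlus_le_ttc]

lemma tendsto_ttc (hA : Tendsto (fun k => (H k).p1) atTop (𝓝 A))
    (hB : Tendsto (fun k => (H k).p2) atTop (𝓝 B))
    (hg : ∀ n, TendstoUniformlyOn (fun k x => 1 / stdPod (H k) x) g atTop (window n)) :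
    ∃ c, Tendsto (fun k => ttc (H k)) atTop (𝓝 c) := by
  have hmem : ∀ᶠ k in atTop, ttc (H k) ∈ Icc (0:ℝ) 1 := Eventually.of_forall fun k =>
    ⟨(H k).ttPlus_nonneg.trans (H k).ttPlus_le_ttc, (H k).ttc_le_one⟩
  have key : ∀ γ₁ γ₂, 0 ≤ γ₁ → γ₂ ≤ 1 → MapClusterPt γ₁ atTop (fun k => ttc (H k)) →
      MapClusterPt γ₂ atTop (fun k => ttc (H k)) → ¬ γ₁ < γ₂ := by
    intro γ₁ γ₂ h₁ h₂ hγ₁ hγ₂ hlt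
    obtain ⟨y, hy₁, hy₂⟩ := exists_between hlt
    obtain ⟨c, hyc, hc₂⟩ := exists_between hy₂
    have hy : y ∈ Ioo (-1) 1 := ⟨by linarith, by linarith⟩
    have ht : max A.t0 B.t0 < artanh y := (lt_artanh_iff hy).2
      ((tanh_max_t0_le_of_mapClusterPt hA hB hγ₁).trans_lt hy₁)
    have hpos := pod_pos_of_frequently_le_ttc hA hB hg ht (by rwa [tanh_artanh hy])
      (hγ₂.frequently ((eventually_gt_nhds hc₂).mono fun _ => le_of_lt))
    have heq := eq_of_frequently_ttc_lt hA hB (t := artanh y)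
      (by rw [tanh_artanh hy]; exact hγ₁.frequently (eventually_lt_nhds hy₁))
    rw [heq, sub_self] at hpos
    exact hpos.false
  obtain ⟨γ, hγ, hγc⟩ := isCompact_Icc.exists_mapClusterPt (tendsto_principal.2 hmem)
  exact ⟨γ, isCompact_Icc.tendsto_nhds_of_unique_mapClusterPt hmem fun γ' hγ' hγ'c =>
    le_antisymm (not_lt.1 (key γ γ' hγ.1 hγ'.2 hγc hγ'c))
      (not_lt.1 (key γ' γ hγ'.1 hγ.2 hγ'c hγc))⟩

lemma exists_coalPair_limit (hA : Tendsto (fun k => (H k).p1) atTop (𝓝 A))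
    (hB : Tendsto (fun k => (H k).p2) atTop (𝓝 B))
    (hg : ∀ n, TendstoUniformlyOn (fun k x => 1 / stdPod (H k) x) g atTop (window n)) :
    ∃ G : CoalPair, G.p1 = A ∧ G.p2 = B ∧ Tendsto (fun k => ttc (H k)) atTop (𝓝 (ttc G)) := by
  obtain ⟨c, hc⟩ := tendsto_ttc hA hB hg
  have hzero : ∀ t, c < Real.tanh t → A.f t = B.f t := fun t ht =>
    eq_of_frequently_ttc_lt hA hB (hc.eventually (eventually_lt_nhds ht)).frequently
  have hpos : ∀ t, max A.t0 B.t0 < t → Real.tanh t < c → 0 < B.f t - A.f t := fun t ht htc => by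
    obtain ⟨c', hc'₁, hc'₂⟩ := exists_between htc
    exact pod_pos_of_frequently_le_ttc hA hB hg ht hc'₁
      ((hc.eventually (eventually_gt_nhds hc'₂)).mono fun _ => le_of_lt).frequently
  have hord : ∀ t, max A.t0 B.t0 ≤ t → A.f t ≤ B.f t := fun t ht =>
    Ici_subset_of_Ioi_subset (isClosed_le A.hf B.hf) (fun t ht => sub_nonneg.1
      (ge_of_tendsto (tendsto_pod hA hB tendsto_const_nhds)
        (((tendsto_tPlus hA hB).eventually (eventually_lt_nhds ht)).mono fun k hk =>
          (H k).pod_nonneg hk.le))) ht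
  let G : CoalPair := ⟨A, B, hord, coalesces_of_tanh
    (fun t ht htc h => (hpos t ht htc).ne' (by rw [h, sub_self])) hzero⟩
  refine ⟨G, rfl, rfl, ?_⟩
  rwa [G.ttc_eq_of_pod (tanh_max_t0_le_of_mapClusterPt hA hB hc.mapClusterPt)
    (le_of_tendsto' hc fun k => (H k).ttc_le_one) (fun t ht htc => (hpos t ht htc).ne')
    fun t ht => sub_eq_zero.2 (hzero t ht).symm]

/-- On non-degenerate terms the standard pod rises by `(1 - b) / 2 → 1/4` between the breakpoint
`b → 1/2` and `1/2` itself; the uniform convergence of the reciprocals near `1/2` forbids such a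
jump to persist. -/
lemma eventually_degenerate (hA : Tendsto (fun k => (H k).p1) atTop (𝓝 A))
    (hB : Tendsto (fun k => (H k).p2) atTop (𝓝 B))
    (hg : ∀ n, TendstoUniformlyOn (fun k x => 1 / stdPod (H k) x) g atTop (window n))
    (ha : Real.tanh (max A.t0 B.t0) = 0) (hc : Tendsto (fun k => ttc (H k)) atTop (𝓝 1)) :
    ∀ᶠ k in atTop, ttPlus (H k) = 0 ∧ ttc (H k) = 1 := by
  by_contra hne
  have hfreq : ∃ᶠ k in atTop, ttc (H k) - ttPlus (H k) < 1 := (not_eventually.1 hne).mono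
    fun k hk => by
      have := (H k).ttPlus_nonneg
      have := (H k).ttc_le_one
      exact lt_of_le_of_ne (by linarith) fun h => hk ⟨by linarith, by linarith⟩
  have ha' : Tendsto (fun k => ttPlus (H k)) atTop (𝓝 0) := ha ▸ tendsto_ttPlus hA hB
  have hb : Tendsto (fun k => (ttc (H k) - ttPlus (H k)) / 2) atTop (𝓝 (1 / 2)) := by
    simpa using (hc.sub ha').div_const 2
  have hhalf : (1 / 2 : ℝ) ∈ Ioo (-1) 1 := ⟨by norm_num, by norm_num⟩
  set P := B.f (artanh (1 / 2)) - A.f (artanh (1 / 2))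
  have hP : 0 < P := pod_pos_of_frequently_le_ttc hA hB hg
    ((lt_artanh_iff hhalf).2 (by rw [ha]; norm_num)) (c := 3 / 4)
    (by rw [tanh_artanh hhalf]; norm_num)
    ((hc.eventually (eventually_gt_nhds (by norm_num))).mono fun _ => le_of_lt).frequently
  have hPm : Tendsto (fun k => podT (H k) ((ttPlus (H k) + ttc (H k)) / 2)) atTop (𝓝 P) :=
    tendsto_pod hA hB ((continuousAt_artanh hhalf).tendsto.comp
      (by simpa using (ha'.add hc).div_const 2))
  obtain ⟨n, hn⟩ := exists_Icc_subset_window (lo := 1 / 4) (hi := 3 / 4) (by norm_num)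
    (by norm_num)
  have hn' : (1 / 2 : ℝ) ∈ window n := hn ⟨by norm_num, by norm_num⟩
  have h₁ : g (1 / 2) = 1 / P := by
    have hlim : Tendsto (fun k => 1 / podT (H k) ((ttPlus (H k) + ttc (H k)) / 2)) atTop
        (𝓝 (1 / P)) := tendsto_const_nhds.div hPm hP.ne'
    refine tendsto_nhds_unique ((hg n).tendsto_comp
      (continuousOn_of_tendstoUniformlyOn_inv_stdPod (hg n) _ hn')
      (tendsto_nhdsWithin_iff.2 ⟨hb, ?_⟩)) (hlim.congr fun k => ?_)
    · filter_upwards [hb.eventually (eventually_gt_nhds (by norm_num : (1 / 4 : ℝ) < 1 / 2)),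
        hb.eventually (eventually_lt_nhds (by norm_num : (1 / 2 : ℝ) < 3 / 4))] with k h₁ h₂
      exact hn ⟨h₁.le, h₂.le⟩
    · rw [stdPod_eq_podShape, podShape_breakpoint]
  have h₂ : g (1 / 2) = 1 / (P + 1 / 4) := by
    have hrise : Tendsto (fun k => (1 - (ttc (H k) - ttPlus (H k)) / 2) / 2) atTop
        (𝓝 (1 / 4)) := by
      convert ((tendsto_const_nhds (x := (1:ℝ))).sub hb).div_const 2 using 2
      norm_num
    have hlim : Tendsto (fun k => 1 / (podT (H k) ((ttPlus (H k) + ttc (H k)) / 2) +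
        (1 - (ttc (H k) - ttPlus (H k)) / 2) / 2)) atTop (𝓝 (1 / (P + 1 / 4))) :=
      tendsto_const_nhds.div (hPm.add hrise) (by linarith)
    refine tendsto_nhds_unique_of_frequently_eq ((hg n).tendsto_at hn') hlim
      (hfreq.mono fun k hk => ?_)
    rw [stdPod_eq_podShape, podShape_half _ hk]
  rw [h₁, one_div, one_div, inv_inj] at h₂
  linarith

lemma tendsto_stdPod (hA : Tendsto (fun k => (H k).p1) atTop (𝓝 A))
    (hB : Tendsto (fun k => (H k).p2) atTop (𝓝 B))
    (hg : ∀ n, TendstoUniformlyOn (fun k x => 1 / stdPod (H k) x) g atTop (window n))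
    {G : CoalPair} (hGA : G.p1 = A) (hGB : G.p2 = B)
    (hc : Tendsto (fun k => ttc (H k)) atTop (𝓝 (ttc G))) {x : ℝ} (hx : x ∈ Ioo 0 1) :
    Tendsto (fun k => stdPod (H k) x) atTop (𝓝 (stdPod G x)) := by
  subst hGA hGB
  have ha : Tendsto (fun k => ttPlus (H k)) atTop (𝓝 (ttPlus G)) := tendsto_ttPlus hA hB
  have hP : ∀ (y : ℕ → ℝ), ∀ y₀ ∈ Ico (0:ℝ) 1, Tendsto y atTop (𝓝 y₀) →
      Tendsto (fun k => podT (H k) (y k)) atTop (𝓝 (podT G y₀)) := fun y y₀ hy₀ hy =>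
    tendsto_pod hA hB ((continuousAt_artanh ⟨by linarith [hy₀.1], hy₀.2⟩).tendsto.comp hy)
  simp only [stdPod_eq_podShape]
  by_cases hdeg : ttc G - ttPlus G = 1
  · have h₀ : ttPlus G = 0 := by linarith [G.ttPlus_nonneg, G.ttc_le_one]
    have h₁ : ttc G = 1 := by linarith
    rw [h₀, h₁, podShape_zero_one]
    refine (hP _ x ⟨hx.1.le, hx.2⟩ tendsto_const_nhds).congr' ?_
    filter_upwards [eventually_degenerate hA hB hg h₀ (h₁ ▸ hc)] with k hk
    rw [hk.1, hk.2, podShape_zero_one]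
  · exact tendsto_podShape ha hc G.ttPlus_nonneg (Real.tanh_lt_one _) G.ttPlus_le_ttc
      G.ttc_le_one (lt_of_le_of_ne (by linarith [G.ttPlus_nonneg, G.ttc_le_one]) hdeg) hP hx

theorem exists_tendsto_dtilde (hA : Tendsto (fun k => (H k).p1) atTop (𝓝 A))
    (hB : Tendsto (fun k => (H k).p2) atTop (𝓝 B))
    (hΔ : ∀ ε > 0, ∃ N, ∀ m ≥ N, ∀ n ≥ N, Delta (stdPod (H m)) (stdPod (H n)) < ε) :
    ∃ G : CoalPair, Tendsto (fun k => dtilde (H k) G) atTop (𝓝 0) := by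
  obtain ⟨g, hg⟩ := exists_tendstoUniformlyOn_of_uniformCauchySeqOn
    (uniformCauchySeqOn_inv_stdPod hΔ)
  obtain ⟨G, hGA, hGB, hc⟩ := exists_coalPair_limit hA hB hg
  have hgG : ∀ n, EqOn g (fun x => 1 / stdPod G x) (window n) := fun n x hx =>
    tendsto_nhds_unique ((hg n).tendsto_at hx) (tendsto_const_nhds.div
      (tendsto_stdPod hA hB hg hGA hGB hc (window_subset_Ioo n hx))
      (G.stdPod_pos (window_subset_Ioo n hx)).ne')
  have hdbar : Tendsto (fun k => dbar (H k) G) atTop (𝓝 0) := by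
    refine squeeze_zero (fun k => dbar_nonneg _ _) (fun k => dbar_le_max_dist _ _) ?_
    rw [hGA, hGB]
    simpa using (tendsto_iff_dist_tendsto_zero.1 hA).max (tendsto_iff_dist_tendsto_zero.1 hB)
  have hDelta := tendsto_Delta_zero fun n => (hg n).congr_right (hgG n)
  exact ⟨G, by simpa [dtilde] using hdbar.add hDelta⟩

end Limit

/-- completeness of (𝒞, d̃): every Cauchy sequence converges to a
coalescing pair; in particular the limit paths are separated strictly inside the pod and
agree from the coalescence time on (when finite). -/
theorem C_complete (F : ℕ → CoalPair)
    (hC : ∀ ε > (0:ℝ), ∃ N : ℕ, ∀ m ≥ N, ∀ n ≥ N, dtilde (F m) (F n) < ε) :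
    ∃ G : CoalPair,
      Filter.Tendsto (fun n => dtilde (F n) G) Filter.atTop (nhds 0) ∧
      (tcFinite G → ∀ t ∈ Set.Ioo (tPlus G) (tcReal G), G.p1.f t ≠ G.p2.f t) ∧
      (¬ tcFinite G → ∀ t, tPlus G < t → G.p1.f t ≠ G.p2.f t) ∧
      (tcFinite G → ∀ t, tcReal G ≤ t → G.p1.f t = G.p2.f t) := by
  obtain ⟨μ, hμ, A, B, hA, hB⟩ := exists_subseq_tendsto_paths fun ε hε =>
    (hC ε hε).imp fun N hN m hm n hn => (dbar_le_dtilde _ _).trans_lt (hN m hm n hn)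
  obtain ⟨G, hG⟩ := exists_tendsto_dtilde hA hB fun ε hε => (hC ε hε).imp fun N hN m hm n hn =>
    (Delta_le_dtilde _ _).trans_lt (hN _ (hm.trans (hμ.id_le m)) _ (hn.trans (hμ.id_le n)))
  refine ⟨G, tendsto_of_cauchy_of_subseq dtilde_triangle dtilde_nonneg hC hμ hG,
    fun _ t ht => ?_, fun hfin t ht => ?_, fun hfin t ht => ?_⟩
  · exact fun h => (G.pod_pos_of_lt_tcReal ht.1 ht.2).ne' (by rw [CoalPair.pod, h, sub_self])
  · exact fun h => (G.pod_pos_of_not_tcFinite hfin ht).ne' (by rw [CoalPair.pod, h, sub_self])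
  · exact (sub_eq_zero.1 (G.pod_eq_zero_of_tcReal_le hfin ht)).symm
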